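/- Let R = K[x,y,z,t,u,v] act by contraction on S = K[X,Y,Z,T,U,V] and F = X^3 Y Z^4 T U^2 V^6 (X^2 Y Z T^2 U − V^7). Then Ann_R(F) = (y^3, u^4, t^4, z^6, x^6, v^7 + x^2 y z t^2 u), and this ideal is a complete intersection. -/

import Mathlib

open MvPolynomial

variable {K : Type*} [Field K] {n : ℕ}

/-- Contraction action of `R = K[x_1,…,x_n]` on the divided power algebra
`S = K[X_1,…,X_n]`: on monomials, `x^a ∘ X^b = X^(b-a)` if `a ≤ b` and `0` otherwise,
extended bilinearly. -/
noncomputable def contract (f F : MvPolynomial (Fin n) K) : MvPolynomial (Fin n) K :=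
  ∑ a ∈ f.support, ∑ b ∈ F.support,
    if a ≤ b then monomial (b - a) (coeff a f * coeff b F) else 0

lemma contract_zero_left (F : MvPolynomial (Fin n) K) : contract 0 F = 0 := by
  simp [contract]

lemma contract_add_left (f g F : MvPolynomial (Fin n) K) :
    contract (f + g) F = contract f F + contract g F := by
  classical
  have key : ∀ (p : MvPolynomial (Fin n) K) (s : Finset (Fin n →₀ ℕ)), p.support ⊆ s →
      contract p F = ∑ a ∈ s, ∑ b ∈ F.support,
        if a ≤ b then monomial (b - a) (coeff a p * coeff b F) else 0 := by
    intro p s hs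
    refine Finset.sum_subset hs ?_
    intro a _ ha
    rw [notMem_support_iff] at ha
    simp [ha]
  rw [key f (f.support ∪ g.support) Finset.subset_union_left,
      key g (f.support ∪ g.support) Finset.subset_union_right,
      key (f + g) (f.support ∪ g.support) (fun a ha => support_add ha),
      ← Finset.sum_add_distrib]
  refine Finset.sum_congr rfl fun a _ => ?_
  rw [← Finset.sum_add_distrib]
  refine Finset.sum_congr rfl fun b _ => ?_
  split_ifs with h
  · rw [coeff_add, add_mul, map_add (monomial (b - a)) _ _]
  · rw [add_zero]

/-- The annihilator of `F` under the contraction action, as an ideal of `R`;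
its members are exactly the `f` with `f ∘ F = 0`. -/
noncomputable def annIdeal (F : MvPolynomial (Fin n) K) : Ideal (MvPolynomial (Fin n) K) where
  carrier := {f | ∀ g, contract (g * f) F = 0}
  zero_mem' := fun g => by rw [mul_zero, contract_zero_left]
  add_mem' := fun {p q} hp hq g => by
    rw [mul_add, contract_add_left, hp g, hq g, add_zero]
  smul_mem' := fun c p hp g => by
    rw [smul_eq_mul, ← mul_assoc]; exact hp (g * c)

/-- Complete intersection ideal: generated by a regular sequence of length `c`. -/
def IsCI (c : ℕ) {R : Type*} [CommRing R] (I : Ideal R) : Prop :=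
  ∃ gs : List R, gs.length = c ∧ RingTheory.Sequence.IsRegular R gs ∧
    Ideal.span {x | x ∈ gs} = I

/-- The degree-`i` component of `A_F = R/Ann_R(F)`. -/
noncomputable def quotComponent (F : MvPolynomial (Fin n) K) (i : ℕ) :
    Submodule K ((MvPolynomial (Fin n) K) ⧸ annIdeal F) :=
  (homogeneousSubmodule (Fin n) K i).map (Ideal.Quotient.mkₐ K (annIdeal F)).toLinearMap

/-- The strong Lefschetz property for a graded algebra given by the family `𝒜` of its
graded components: some linear form `ℓ` has all multiplication maps
`×ℓ^k : 𝒜_i → 𝒜_{i+k}` of maximal rank (injective or surjective). -/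
def SLP (K : Type*) {A : Type*} [CommSemiring K] [CommRing A] [Algebra K A]
    (𝒜 : ℕ → Submodule K A) : Prop :=
  ∃ ℓ ∈ 𝒜 1, ∀ i k : ℕ, 0 < k →
    (∀ x ∈ 𝒜 i, ℓ ^ k * x = 0 → x = 0) ∨ (∀ y ∈ 𝒜 (i + k), ∃ x ∈ 𝒜 i, ℓ ^ k * x = y)

/-! ### Auxiliary material for Statement 18 -/

section ContractLemmas

lemma contract_eq (f F : MvPolynomial (Fin n) K) (s t : Finset (Fin n →₀ ℕ))
    (hs : f.support ⊆ s) (ht : F.support ⊆ t) :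
    contract f F = ∑ a ∈ s, ∑ b ∈ t,
      if a ≤ b then monomial (b - a) (coeff a f * coeff b F) else 0 := by
  classical
  rw [contract]
  rw [Finset.sum_subset hs (by intro a _ ha; rw [notMem_support_iff] at ha; simp [ha])]
  refine Finset.sum_congr rfl fun a _ => ?_
  refine Finset.sum_subset ht fun b _ hb => ?_
  rw [notMem_support_iff] at hb; simp [hb]

lemma contract_zero_right (f : MvPolynomial (Fin n) K) : contract f 0 = 0 := by
  simp [contract]

lemma contract_monomial_monomial (a b : Fin n →₀ ℕ) (c e : K) :
    contract (monomial a c) (monomial b e) =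
      if a ≤ b then monomial (b - a) (c * e) else 0 := by
  classical
  rw [contract_eq _ _ {a} {b} support_monomial_subset support_monomial_subset]
  simp [coeff_monomial]

lemma contract_add_right (f F G : MvPolynomial (Fin n) K) :
    contract f (F + G) = contract f F + contract f G := by
  classical
  rw [contract_eq f F f.support (F.support ∪ G.support) subset_rfl Finset.subset_union_left,
    contract_eq f G f.support (F.support ∪ G.support) subset_rfl Finset.subset_union_right,
    contract_eq f (F + G) f.support (F.support ∪ G.support) subset_rfl
      (fun a ha => support_add ha), ← Finset.sum_add_distrib]
  refine Finset.sum_congr rfl fun a _ => ?_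
  rw [← Finset.sum_add_distrib]
  refine Finset.sum_congr rfl fun b _ => ?_
  split_ifs with h
  · rw [coeff_add, mul_add, map_add]
  · rw [add_zero]

lemma contract_sum_left {α : Type*} (s : Finset α) (p : α → MvPolynomial (Fin n) K)
    (F : MvPolynomial (Fin n) K) :
    contract (∑ i ∈ s, p i) F = ∑ i ∈ s, contract (p i) F := by
  classical
  induction s using Finset.cons_induction with
  | empty => simp [contract]
  | cons a s ha ih => rw [Finset.sum_cons, Finset.sum_cons, contract_add_left, ih]

lemma contract_sum_right {α : Type*} (s : Finset α) (f : MvPolynomial (Fin n) K)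
    (P : α → MvPolynomial (Fin n) K) :
    contract f (∑ i ∈ s, P i) = ∑ i ∈ s, contract f (P i) := by
  classical
  induction s using Finset.cons_induction with
  | empty => simp [contract_zero_right]
  | cons a s ha ih => rw [Finset.sum_cons, Finset.sum_cons, contract_add_right, ih]

lemma finsupp_add_le_iff (a b c : Fin n →₀ ℕ) :
    a + b ≤ c ↔ b ≤ c ∧ a ≤ c - b := by
  simp only [Finsupp.le_def, Finsupp.add_apply, Finsupp.tsub_apply]
  constructor
  · intro h; exact ⟨fun i => by have := h i; omega, fun i => by have := h i; omega⟩
  · intro ⟨h1, h2⟩ i; have := h1 i; have := h2 i; omega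

lemma contract_monomial_contract (a b : Fin n →₀ ℕ) (c e : K)
    (F : MvPolynomial (Fin n) K) :
    contract (monomial (a + b) (c * e)) F
      = contract (monomial a c) (contract (monomial b e) F) := by
  classical
  rw [contract_eq (monomial b e) F {b} F.support support_monomial_subset subset_rfl]
  rw [Finset.sum_singleton, contract_sum_right,
    contract_eq (monomial (a+b) (c*e)) F {a+b} F.support support_monomial_subset subset_rfl,
    Finset.sum_singleton]
  refine Finset.sum_congr rfl fun b' _ => ?_
  rw [coeff_monomial, if_pos rfl, coeff_monomial, if_pos rfl]
  by_cases hb : b ≤ b'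
  · rw [if_pos hb, contract_monomial_monomial]
    by_cases ha : a ≤ b' - b
    · rw [if_pos ha, if_pos ((finsupp_add_le_iff a b b').mpr ⟨hb, ha⟩)]
      rw [tsub_tsub, add_comm b a, mul_assoc]
    · rw [if_neg ha, if_neg (fun h => ha ((finsupp_add_le_iff a b b').mp h).2)]
  · rw [if_neg hb, if_neg (fun h => hb ((finsupp_add_le_iff a b b').mp h).1)]
    rw [contract_zero_right]

lemma contract_mul (f g F : MvPolynomial (Fin n) K) :
    contract (f * g) F = contract f (contract g F) := by
  classical
  conv_lhs => rw [f.as_sum, g.as_sum, Finset.sum_mul_sum]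
  conv_rhs => rw [f.as_sum, g.as_sum]
  rw [contract_sum_left, contract_sum_left]
  refine Finset.sum_congr rfl fun a _ => ?_
  rw [contract_sum_left g.support, contract_sum_left g.support, contract_sum_right]
  refine Finset.sum_congr rfl fun b _ => ?_
  rw [monomial_mul, contract_monomial_contract]

lemma mem_annIdeal_iff (F f : MvPolynomial (Fin n) K) :
    f ∈ annIdeal F ↔ contract f F = 0 := by
  constructor
  · intro h
    have := h 1
    rwa [one_mul] at this
  · intro h g
    rw [contract_mul, h, contract_zero_right]

lemma coeff_contract (f F : MvPolynomial (Fin n) K) (t : Finset (Fin n →₀ ℕ))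
    (ht : F.support ⊆ t) (e : Fin n →₀ ℕ) :
    coeff e (contract f F) = ∑ b ∈ t, if e ≤ b then coeff (b - e) f * coeff b F else 0 := by
  classical
  rw [contract_eq f F f.support t subset_rfl ht]
  simp_rw [coeff_sum]
  rw [Finset.sum_comm]
  refine Finset.sum_congr rfl fun b _ => ?_
  have step : ∀ a : Fin n →₀ ℕ,
      coeff e (if a ≤ b then monomial (b - a) (coeff a f * coeff b F) else 0)
        = if e ≤ b ∧ a = b - e then coeff a f * coeff b F else 0 := by
    intro a
    split_ifs with h1 h2 h3
    · rw [coeff_monomial, if_pos]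
      obtain ⟨h2a, rfl⟩ := h2
      ext i
      simp only [Finsupp.tsub_apply]
      have := h2a i
      omega
    · rw [coeff_monomial, if_neg]
      intro hba
      apply h2
      have h1' := h1
      simp only [Finsupp.le_def] at h1'
      constructor
      · intro i
        have : (b - a) i = e i := by rw [hba]
        simp only [Finsupp.tsub_apply] at this
        have := h1' i
        omega
      · ext i
        have : (b - a) i = e i := by rw [hba]
        simp only [Finsupp.tsub_apply] at this ⊢
        have := h1' i
        omega
    · exfalso; apply h1
      obtain ⟨h2a, rfl⟩ := h3
      simp only [Finsupp.le_def] at h2a ⊢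
      intro i; simp only [Finsupp.tsub_apply]; omega
    · exact coeff_zero e
  simp_rw [step]
  by_cases he : e ≤ b
  · simp only [he, true_and]
    rw [Finset.sum_ite_eq' f.support (b - e) (fun a => coeff a f * coeff b F)]
    split_ifs with h
    · rfl
    · rw [notMem_support_iff] at h; rw [h, zero_mul]
  · simp only [he, false_and, if_false, Finset.sum_const_zero]

end ContractLemmas

section Stmt18Aux

/-- Convenient constructor for explicit exponent vectors on six variables. -/
noncomputable def ee (v : Fin 6 → ℕ) : Fin 6 →₀ ℕ := Finsupp.equivFunOnFinite.symm v

@[simp] lemma ee_apply (v : Fin 6 → ℕ) (i : Fin 6) : ee v i = v i := rfl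

noncomputable def m1 : Fin 6 →₀ ℕ := ee ![5,2,5,3,3,6]
noncomputable def m2 : Fin 6 →₀ ℕ := ee ![3,1,4,1,2,13]
noncomputable def dd : Fin 6 →₀ ℕ := ee ![2,1,1,2,1,0]
noncomputable def v7 : Fin 6 →₀ ℕ := ee ![0,0,0,0,0,7]
noncomputable def t1 : Fin 6 →₀ ℕ := ee ![0,3,0,0,0,0]
noncomputable def t2 : Fin 6 →₀ ℕ := ee ![0,0,0,0,4,0]
noncomputable def t3 : Fin 6 →₀ ℕ := ee ![0,0,0,4,0,0]
noncomputable def t4 : Fin 6 →₀ ℕ := ee ![0,0,6,0,0,0]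
noncomputable def t5 : Fin 6 →₀ ℕ := ee ![6,0,0,0,0,0]

@[simp] lemma m1_0 : (m1 : Fin 6 →₀ ℕ) (0 : Fin 6) = 5 := rfl
@[simp] lemma m1_1 : (m1 : Fin 6 →₀ ℕ) (1 : Fin 6) = 2 := rfl
@[simp] lemma m1_2 : (m1 : Fin 6 →₀ ℕ) (2 : Fin 6) = 5 := rfl
@[simp] lemma m1_3 : (m1 : Fin 6 →₀ ℕ) (3 : Fin 6) = 3 := rfl
@[simp] lemma m1_4 : (m1 : Fin 6 →₀ ℕ) (4 : Fin 6) = 3 := rfl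
@[simp] lemma m1_5 : (m1 : Fin 6 →₀ ℕ) (5 : Fin 6) = 6 := rfl
@[simp] lemma m2_0 : (m2 : Fin 6 →₀ ℕ) (0 : Fin 6) = 3 := rfl
@[simp] lemma m2_1 : (m2 : Fin 6 →₀ ℕ) (1 : Fin 6) = 1 := rfl
@[simp] lemma m2_2 : (m2 : Fin 6 →₀ ℕ) (2 : Fin 6) = 4 := rfl
@[simp] lemma m2_3 : (m2 : Fin 6 →₀ ℕ) (3 : Fin 6) = 1 := rfl
@[simp] lemma m2_4 : (m2 : Fin 6 →₀ ℕ) (4 : Fin 6) = 2 := rfl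
@[simp] lemma m2_5 : (m2 : Fin 6 →₀ ℕ) (5 : Fin 6) = 13 := rfl
@[simp] lemma dd_0 : (dd : Fin 6 →₀ ℕ) (0 : Fin 6) = 2 := rfl
@[simp] lemma dd_1 : (dd : Fin 6 →₀ ℕ) (1 : Fin 6) = 1 := rfl
@[simp] lemma dd_2 : (dd : Fin 6 →₀ ℕ) (2 : Fin 6) = 1 := rfl
@[simp] lemma dd_3 : (dd : Fin 6 →₀ ℕ) (3 : Fin 6) = 2 := rfl
@[simp] lemma dd_4 : (dd : Fin 6 →₀ ℕ) (4 : Fin 6) = 1 := rfl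
@[simp] lemma dd_5 : (dd : Fin 6 →₀ ℕ) (5 : Fin 6) = 0 := rfl
@[simp] lemma v7_0 : (v7 : Fin 6 →₀ ℕ) (0 : Fin 6) = 0 := rfl
@[simp] lemma v7_1 : (v7 : Fin 6 →₀ ℕ) (1 : Fin 6) = 0 := rfl
@[simp] lemma v7_2 : (v7 : Fin 6 →₀ ℕ) (2 : Fin 6) = 0 := rfl
@[simp] lemma v7_3 : (v7 : Fin 6 →₀ ℕ) (3 : Fin 6) = 0 := rfl
@[simp] lemma v7_4 : (v7 : Fin 6 →₀ ℕ) (4 : Fin 6) = 0 := rfl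
@[simp] lemma v7_5 : (v7 : Fin 6 →₀ ℕ) (5 : Fin 6) = 7 := rfl
@[simp] lemma t1_0 : (t1 : Fin 6 →₀ ℕ) (0 : Fin 6) = 0 := rfl
@[simp] lemma t1_1 : (t1 : Fin 6 →₀ ℕ) (1 : Fin 6) = 3 := rfl
@[simp] lemma t1_2 : (t1 : Fin 6 →₀ ℕ) (2 : Fin 6) = 0 := rfl
@[simp] lemma t1_3 : (t1 : Fin 6 →₀ ℕ) (3 : Fin 6) = 0 := rfl
@[simp] lemma t1_4 : (t1 : Fin 6 →₀ ℕ) (4 : Fin 6) = 0 := rfl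
@[simp] lemma t1_5 : (t1 : Fin 6 →₀ ℕ) (5 : Fin 6) = 0 := rfl
@[simp] lemma t2_0 : (t2 : Fin 6 →₀ ℕ) (0 : Fin 6) = 0 := rfl
@[simp] lemma t2_1 : (t2 : Fin 6 →₀ ℕ) (1 : Fin 6) = 0 := rfl
@[simp] lemma t2_2 : (t2 : Fin 6 →₀ ℕ) (2 : Fin 6) = 0 := rfl
@[simp] lemma t2_3 : (t2 : Fin 6 →₀ ℕ) (3 : Fin 6) = 0 := rfl
@[simp] lemma t2_4 : (t2 : Fin 6 →₀ ℕ) (4 : Fin 6) = 4 := rfl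
@[simp] lemma t2_5 : (t2 : Fin 6 →₀ ℕ) (5 : Fin 6) = 0 := rfl
@[simp] lemma t3_0 : (t3 : Fin 6 →₀ ℕ) (0 : Fin 6) = 0 := rfl
@[simp] lemma t3_1 : (t3 : Fin 6 →₀ ℕ) (1 : Fin 6) = 0 := rfl
@[simp] lemma t3_2 : (t3 : Fin 6 →₀ ℕ) (2 : Fin 6) = 0 := rfl
@[simp] lemma t3_3 : (t3 : Fin 6 →₀ ℕ) (3 : Fin 6) = 4 := rfl
@[simp] lemma t3_4 : (t3 : Fin 6 →₀ ℕ) (4 : Fin 6) = 0 := rfl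
@[simp] lemma t3_5 : (t3 : Fin 6 →₀ ℕ) (5 : Fin 6) = 0 := rfl
@[simp] lemma t4_0 : (t4 : Fin 6 →₀ ℕ) (0 : Fin 6) = 0 := rfl
@[simp] lemma t4_1 : (t4 : Fin 6 →₀ ℕ) (1 : Fin 6) = 0 := rfl
@[simp] lemma t4_2 : (t4 : Fin 6 →₀ ℕ) (2 : Fin 6) = 6 := rfl
@[simp] lemma t4_3 : (t4 : Fin 6 →₀ ℕ) (3 : Fin 6) = 0 := rfl
@[simp] lemma t4_4 : (t4 : Fin 6 →₀ ℕ) (4 : Fin 6) = 0 := rfl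
@[simp] lemma t4_5 : (t4 : Fin 6 →₀ ℕ) (5 : Fin 6) = 0 := rfl
@[simp] lemma t5_0 : (t5 : Fin 6 →₀ ℕ) (0 : Fin 6) = 6 := rfl
@[simp] lemma t5_1 : (t5 : Fin 6 →₀ ℕ) (1 : Fin 6) = 0 := rfl
@[simp] lemma t5_2 : (t5 : Fin 6 →₀ ℕ) (2 : Fin 6) = 0 := rfl
@[simp] lemma t5_3 : (t5 : Fin 6 →₀ ℕ) (3 : Fin 6) = 0 := rfl
@[simp] lemma t5_4 : (t5 : Fin 6 →₀ ℕ) (4 : Fin 6) = 0 := rfl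
@[simp] lemma t5_5 : (t5 : Fin 6 →₀ ℕ) (5 : Fin 6) = 0 := rfl


lemma monomial_exp_congr (A B : Fin 6 →₀ ℕ) (h : ∀ i, A i = B i) (c : K) :
    monomial A c = monomial B c := by rw [Finsupp.ext h]

lemma hX (i : Fin 6) : (X i : MvPolynomial (Fin 6) K) = monomial (Finsupp.single i 1) 1 := rfl

/-- The polynomial `v^7 + x^2*y*z*t^2*u`. -/
noncomputable def GG (K : Type*) [Field K] : MvPolynomial (Fin 6) K :=
  monomial v7 1 + monomial dd 1

/-- The dual generator `F`. -/
noncomputable def FF (K : Type*) [Field K] : MvPolynomial (Fin 6) K :=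
  monomial m1 1 + monomial m2 (-1)

/-- The claimed annihilator ideal. -/
noncomputable def Igen (K : Type*) [Field K] : Ideal (MvPolynomial (Fin 6) K) :=
  Ideal.span {monomial t1 1, monomial t2 1, monomial t3 1, monomial t4 1, monomial t5 1, GG K}

lemma hg1 : (X 1 : MvPolynomial (Fin 6) K)^3 = monomial t1 1 := by
  rw [X_pow_eq_monomial]
  exact monomial_exp_congr _ _
    (fun i => by fin_cases i <;> simp [Finsupp.single_apply]) 1

lemma hg2 : (X 4 : MvPolynomial (Fin 6) K)^4 = monomial t2 1 := by
  rw [X_pow_eq_monomial]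
  exact monomial_exp_congr _ _
    (fun i => by fin_cases i <;> simp [Finsupp.single_apply]) 1

lemma hg3 : (X 3 : MvPolynomial (Fin 6) K)^4 = monomial t3 1 := by
  rw [X_pow_eq_monomial]
  exact monomial_exp_congr _ _
    (fun i => by fin_cases i <;> simp [Finsupp.single_apply]) 1

lemma hg4 : (X 2 : MvPolynomial (Fin 6) K)^6 = monomial t4 1 := by
  rw [X_pow_eq_monomial]
  exact monomial_exp_congr _ _
    (fun i => by fin_cases i <;> simp [Finsupp.single_apply]) 1

lemma hg5 : (X 0 : MvPolynomial (Fin 6) K)^6 = monomial t5 1 := by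
  rw [X_pow_eq_monomial]
  exact monomial_exp_congr _ _
    (fun i => by fin_cases i <;> simp [Finsupp.single_apply]) 1

lemma hprod : (X 0^2 * X 1 * X 2 * X 3^2 * X 4 : MvPolynomial (Fin 6) K) = monomial dd 1 := by
  simp only [X_pow_eq_monomial]
  simp only [hX, monomial_mul, one_mul]
  refine monomial_exp_congr _ _ (fun i => ?_) 1
  fin_cases i <;> simp [Finsupp.single_apply]

lemma hg6 : (X 5^7 + X 0^2 * X 1 * X 2 * X 3^2 * X 4 : MvPolynomial (Fin 6) K) = GG K := by
  rw [hprod, X_pow_eq_monomial, GG]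
  congr 1
  exact monomial_exp_congr _ _
    (fun i => by fin_cases i <;> simp [Finsupp.single_apply]) 1

lemma hFF : ((X 0 : MvPolynomial (Fin 6) K) ^ 3 * X 1 * X 2 ^ 4 * X 3 * X 4 ^ 2 * X 5 ^ 6 *
    (X 0 ^ 2 * X 1 * X 2 * X 3 ^ 2 * X 4 - X 5 ^ 7)) = FF K := by
  rw [mul_sub]
  have h1 : ((X 0 : MvPolynomial (Fin 6) K) ^ 3 * X 1 * X 2 ^ 4 * X 3 * X 4 ^ 2 * X 5 ^ 6 *
      (X 0 ^ 2 * X 1 * X 2 * X 3 ^ 2 * X 4)) = monomial m1 1 := by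
    simp only [X_pow_eq_monomial]
    simp only [hX, monomial_mul, one_mul]
    refine monomial_exp_congr _ _ (fun i => ?_) 1
    fin_cases i <;> simp [Finsupp.single_apply]
  have h2 : ((X 0 : MvPolynomial (Fin 6) K) ^ 3 * X 1 * X 2 ^ 4 * X 3 * X 4 ^ 2 * X 5 ^ 6 *
      X 5 ^ 7) = monomial m2 1 := by
    simp only [X_pow_eq_monomial]
    simp only [hX, monomial_mul, one_mul]
    refine monomial_exp_congr _ _ (fun i => ?_) 1
    fin_cases i <;> simp [Finsupp.single_apply]
  rw [h1, h2, FF, show (monomial m2 (-1) : MvPolynomial (Fin 6) K) = -(monomial m2 1) from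
    map_neg _ 1, ← sub_eq_add_neg]

lemma m1_ne_m2 : (m1 : Fin 6 →₀ ℕ) ≠ m2 := by
  intro h
  have := congrArg (fun p : Fin 6 →₀ ℕ => p (5 : Fin 6)) h
  simp at this

lemma supp_FF : (FF K).support ⊆ {m1, m2} := by
  refine (support_add).trans ?_
  intro x hx
  rcases Finset.mem_union.mp hx with h | h
  · exact Finset.mem_insert.mpr (Or.inl (Finset.mem_singleton.mp (support_monomial_subset h)))
  · exact Finset.mem_insert.mpr (Or.inr (support_monomial_subset h))

lemma coeff_contract_FF (f : MvPolynomial (Fin 6) K) (e : Fin 6 →₀ ℕ) :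
    coeff e (contract f (FF K)) =
      (if e ≤ m1 then coeff (m1 - e) f else 0) - (if e ≤ m2 then coeff (m2 - e) f else 0) := by
  classical
  rw [coeff_contract f _ {m1, m2} supp_FF e, Finset.sum_pair m1_ne_m2]
  have c1 : coeff m1 (FF K) = 1 := by
    simp [FF, coeff_monomial, m1_ne_m2, Ne.symm m1_ne_m2]
  have c2 : coeff m2 (FF K) = -1 := by
    simp [FF, coeff_monomial, m1_ne_m2, Ne.symm m1_ne_m2]
  rw [c1, c2]
  split_ifs <;> ring

lemma cond1 (f : MvPolynomial (Fin 6) K) (hf : contract f (FF K) = 0)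
    (a : Fin 6 →₀ ℕ) (ha : a ≤ m1) (hd : ¬ dd ≤ a) : coeff a f = 0 := by
  have h := congrArg (coeff (m1 - a)) hf
  rw [coeff_contract_FF, coeff_zero] at h
  have e1 : m1 - a ≤ m1 := tsub_le_self
  have e2 : m1 - (m1 - a) = a := by
    ext i
    have := ha i
    simp only [Finsupp.tsub_apply]
    omega
  have e3 : ¬ (m1 - a ≤ m2) := by
    intro hc
    apply hd
    intro i
    have h1 := ha i
    have h2 := hc i
    simp only [Finsupp.tsub_apply] at h2
    revert h1 h2
    fin_cases i <;> (try simp) <;> omega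
  rw [if_pos e1, if_neg e3, e2, sub_zero] at h
  exact h

lemma cond3 (f : MvPolynomial (Fin 6) K) (hf : contract f (FF K) = 0)
    (a : Fin 6 →₀ ℕ) (ha : a ≤ m1) (hd : dd ≤ a) : coeff a f = coeff (a - dd + v7) f := by
  have h := congrArg (coeff (m1 - a)) hf
  rw [coeff_contract_FF, coeff_zero] at h
  have e1 : m1 - a ≤ m1 := tsub_le_self
  have e2 : m1 - (m1 - a) = a := by
    ext i
    have := ha i
    simp only [Finsupp.tsub_apply]
    omega
  have e3 : m1 - a ≤ m2 := by
    intro i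
    have h1 := ha i
    have h2 := hd i
    simp only [Finsupp.tsub_apply]
    revert h1 h2
    fin_cases i <;> (try simp) <;> omega
  have e4 : m2 - (m1 - a) = a - dd + v7 := by
    ext i
    have h1 := ha i
    have h2 := hd i
    simp only [Finsupp.tsub_apply, Finsupp.add_apply]
    revert h1 h2
    fin_cases i <;> (try simp) <;> omega
  rw [if_pos e1, if_pos e3, e2, e4, sub_eq_zero] at h
  exact h

lemma gen_mem_set (p : MvPolynomial (Fin 6) K)
    (hp : p = monomial t1 1 ∨ p = monomial t2 1 ∨ p = monomial t3 1 ∨ p = monomial t4 1 ∨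
      p = monomial t5 1 ∨ p = GG K) : p ∈ Igen K := by
  apply Ideal.subset_span
  simpa [Set.mem_insert_iff] using hp

lemma dvd_mem {t a : Fin 6 →₀ ℕ} (h : t ≤ a) (hm : monomial t (1:K) ∈ Igen K) (c : K) :
    monomial a c ∈ Igen K := by
  have : monomial a c = monomial (a - t) c * monomial t (1:K) := by
    rw [monomial_mul, mul_one]
    refine monomial_exp_congr _ _ (fun i => ?_) c
    have := h i
    simp only [Finsupp.add_apply, Finsupp.tsub_apply]
    omega
  rw [this]
  exact Ideal.mul_mem_left _ _ hm

/-- Monomials outside both `m1` and `m2` belong to the ideal. -/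
lemma mono_mem_Igen : ∀ (N : ℕ) (a : Fin 6 →₀ ℕ) (c : K), a 5 ≤ N →
    ¬ a ≤ m1 → ¬ a ≤ m2 → monomial a c ∈ Igen K := by
  intro N
  induction N with
  | zero =>
    intro a c h5 h1 h2
    rw [Finsupp.le_def, not_forall] at h1
    obtain ⟨i, hi⟩ := h1
    rw [not_le] at hi
    fin_cases i
    · exact dvd_mem (t := t5) (Finsupp.le_def.mpr (fun j => by revert hi; fin_cases j <;> (try simp) <;> omega))
        (gen_mem_set _ (by tauto)) c
    · exact dvd_mem (t := t1) (Finsupp.le_def.mpr (fun j => by revert hi; fin_cases j <;> (try simp) <;> omega))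
        (gen_mem_set _ (by tauto)) c
    · exact dvd_mem (t := t4) (Finsupp.le_def.mpr (fun j => by revert hi; fin_cases j <;> (try simp) <;> omega))
        (gen_mem_set _ (by tauto)) c
    · exact dvd_mem (t := t3) (Finsupp.le_def.mpr (fun j => by revert hi; fin_cases j <;> (try simp) <;> omega))
        (gen_mem_set _ (by tauto)) c
    · exact dvd_mem (t := t2) (Finsupp.le_def.mpr (fun j => by revert hi; fin_cases j <;> (try simp) <;> omega))
        (gen_mem_set _ (by tauto)) c
    · simp at hi
      omega
  | succ N IH =>
    intro a c h5 h1 h2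
    rw [Finsupp.le_def, not_forall] at h1
    obtain ⟨i, hi⟩ := h1
    rw [not_le] at hi
    fin_cases i
    · exact dvd_mem (t := t5) (Finsupp.le_def.mpr (fun j => by revert hi; fin_cases j <;> (try simp) <;> omega))
        (gen_mem_set _ (by tauto)) c
    · exact dvd_mem (t := t1) (Finsupp.le_def.mpr (fun j => by revert hi; fin_cases j <;> (try simp) <;> omega))
        (gen_mem_set _ (by tauto)) c
    · exact dvd_mem (t := t4) (Finsupp.le_def.mpr (fun j => by revert hi; fin_cases j <;> (try simp) <;> omega))
        (gen_mem_set _ (by tauto)) c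
    · exact dvd_mem (t := t3) (Finsupp.le_def.mpr (fun j => by revert hi; fin_cases j <;> (try simp) <;> omega))
        (gen_mem_set _ (by tauto)) c
    · exact dvd_mem (t := t2) (Finsupp.le_def.mpr (fun j => by revert hi; fin_cases j <;> (try simp) <;> omega))
        (gen_mem_set _ (by tauto)) c
    · -- a 5 ≥ 7 : use the reduction via GG
      simp at hi
      -- hi : 6 < a 5
      have key : monomial a c = monomial (a - v7) c * GG K - monomial (a - v7 + dd) c := by
        rw [GG, mul_add, monomial_mul, monomial_mul, mul_one]
        have e1 : a - v7 + v7 = a := by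
          ext i
          simp only [Finsupp.add_apply, Finsupp.tsub_apply]
          revert hi
          fin_cases i <;> (try simp) <;> omega
        rw [e1]
        abel
      rw [key]
      refine sub_mem (Ideal.mul_mem_left _ _ (gen_mem_set _ (by tauto))) ?_
      -- new exponent
      have h2' := h2
      rw [Finsupp.le_def, not_forall] at h2'
      obtain ⟨j, hj⟩ := h2'
      rw [not_le] at hj
      refine IH (a - v7 + dd) c ?_ ?_ ?_
      · simp only [Finsupp.add_apply, Finsupp.tsub_apply, v7_5, dd_5]
        omega
      · rw [Finsupp.le_def, not_forall]
        fin_cases j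
        · refine ⟨0, ?_⟩
          simp only [Finsupp.add_apply, Finsupp.tsub_apply, not_le]
          revert hj
          simp
          omega
        · refine ⟨1, ?_⟩
          simp only [Finsupp.add_apply, Finsupp.tsub_apply, not_le]
          revert hj
          simp
          omega
        · refine ⟨2, ?_⟩
          simp only [Finsupp.add_apply, Finsupp.tsub_apply, not_le]
          revert hj
          simp
          omega
        · refine ⟨3, ?_⟩
          simp only [Finsupp.add_apply, Finsupp.tsub_apply, not_le]
          revert hj
          simp
          omega
        · refine ⟨4, ?_⟩
          simp only [Finsupp.add_apply, Finsupp.tsub_apply, not_le]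
          revert hj
          simp
          omega
        · refine ⟨5, ?_⟩
          simp only [Finsupp.add_apply, Finsupp.tsub_apply, not_le]
          revert hj
          simp
          omega
      · rw [Finsupp.le_def, not_forall]
        refine ⟨3, ?_⟩
        simp only [Finsupp.add_apply, Finsupp.tsub_apply, not_le]
        simp

theorem ann_le_Igen (f : MvPolynomial (Fin 6) K) (hf : contract f (FF K) = 0) :
    f ∈ Igen K := by
  classical
  set Φ : Finset (Fin 6 →₀ ℕ) := f.support.filter (fun a => dd ≤ a ∧ a ≤ m1) with hΦ
  set fsub : MvPolynomial (Fin 6) K :=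
    ∑ a ∈ Φ, C (coeff a f) * (monomial (a - dd) (1:K) * GG K) with hfsub
  have hsub_mem : fsub ∈ Igen K := by
    refine sum_mem fun a ha => ?_
    exact Ideal.mul_mem_left _ _ (Ideal.mul_mem_left _ _ (gen_mem_set _ (by tauto)))
  have hterm : ∀ a ∈ Φ, (monomial (a - dd) (1:K) * GG K)
      = monomial (a - dd + v7) 1 + monomial a 1 := by
    intro a ha
    have hda : dd ≤ a := (Finset.mem_filter.mp ha).2.1
    rw [GG, mul_add, monomial_mul, monomial_mul, mul_one]
    congr 1
    refine monomial_exp_congr _ _ (fun i => ?_) 1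
    have := hda i
    simp only [Finsupp.add_apply, Finsupp.tsub_apply]
    omega
  have hcoeff : ∀ b : Fin 6 →₀ ℕ, b ≤ m1 ∨ b ≤ m2 → coeff b (f - fsub) = 0 := by
    intro b hb
    have hfsubco : coeff b fsub =
        (∑ a ∈ Φ, if a - dd + v7 = b then coeff a f else 0)
          + (∑ a ∈ Φ, if a = b then coeff a f else 0) := by
      rw [hfsub, coeff_sum, ← Finset.sum_add_distrib]
      refine Finset.sum_congr rfl fun a ha => ?_
      rw [coeff_C_mul, hterm a ha, coeff_add, coeff_monomial, coeff_monomial]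
      split_ifs <;> ring
    have hS2 : (∑ a ∈ Φ, if a = b then coeff a f else 0) = if b ∈ Φ then coeff b f else 0 :=
      Finset.sum_ite_eq' Φ b (fun a => coeff a f)
    by_cases hb1 : b ≤ m1
    · have hS1 : (∑ a ∈ Φ, if a - dd + v7 = b then coeff a f else 0) = 0 := by
        refine Finset.sum_eq_zero fun a ha => ?_
        rw [if_neg]
        intro hc
        have : (a - dd + v7) 5 = b 5 := by rw [hc]
        have hb5 : b 5 ≤ 6 := by
          have := hb1 5
          simpa using this
        simp only [Finsupp.add_apply, Finsupp.tsub_apply, v7_5, dd_5] at this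
        omega
      rw [coeff_sub, hfsubco, hS1, hS2, zero_add]
      by_cases hd : dd ≤ b
      · by_cases hbs : b ∈ f.support
        · rw [if_pos (Finset.mem_filter.mpr ⟨hbs, hd, hb1⟩), sub_self]
        · rw [if_neg (fun hc => hbs (Finset.mem_filter.mp hc).1), notMem_support_iff.mp hbs,
            sub_zero]
      · rw [if_neg (fun hc => hd (Finset.mem_filter.mp hc).2.1),
          cond1 f hf b hb1 hd, sub_zero]
    · have hb2 : b ≤ m2 := hb.resolve_left hb1
      have hb5 : 7 ≤ b 5 := by
        by_contra hb5
        apply hb1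
        intro i
        have h2 := hb2 i
        revert h2 hb5
        fin_cases i <;> (try simp) <;> omega
      set c : Fin 6 →₀ ℕ := b + dd - v7 with hc
      have hc1 : c ≤ m1 := by
        intro i
        have h2 := hb2 i
        simp only [hc, Finsupp.tsub_apply, Finsupp.add_apply]
        revert h2
        fin_cases i <;> (try simp) <;> omega
      have hc2 : dd ≤ c := by
        intro i
        simp only [hc, Finsupp.tsub_apply, Finsupp.add_apply]
        revert hb5
        fin_cases i <;> (try simp) <;> omega
      have hc3 : c - dd + v7 = b := by
        ext i
        simp only [hc, Finsupp.tsub_apply, Finsupp.add_apply]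
        revert hb5
        fin_cases i <;> (try simp) <;> omega
      have hfb : coeff b f = coeff c f := by
        have := cond3 f hf c hc1 hc2
        rw [hc3] at this
        exact this.symm
      have hS2' : (∑ a ∈ Φ, if a = b then coeff a f else 0) = 0 := by
        rw [hS2, if_neg (fun hcm => hb1 (Finset.mem_filter.mp hcm).2.2)]
      have hS1 : (∑ a ∈ Φ, if a - dd + v7 = b then coeff a f else 0)
          = if c ∈ Φ then coeff c f else 0 := by
        rw [← Finset.sum_ite_eq' Φ c (fun a => coeff a f)]
        refine Finset.sum_congr rfl fun a ha => ?_
        have hda : dd ≤ a := (Finset.mem_filter.mp ha).2.1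
        congr 1
        apply propext
        constructor
        · intro hab
          ext i
          have : (a - dd + v7) i = b i := by rw [hab]
          have hdi := hda i
          simp only [Finsupp.add_apply, Finsupp.tsub_apply] at this ⊢
          simp only [hc, Finsupp.tsub_apply, Finsupp.add_apply]
          revert this hdi
          fin_cases i <;> (try simp) <;> omega
        · rintro rfl
          exact hc3
      rw [coeff_sub, hfsubco, hS1, hS2', add_zero]
      by_cases hcm : c ∈ Φ
      · rw [if_pos hcm, hfb, sub_self]
      · have hcs : c ∉ f.support := fun hs => hcm (Finset.mem_filter.mpr ⟨hs, hc2, hc1⟩)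
        rw [if_neg hcm, hfb, notMem_support_iff.mp hcs, sub_zero]
  have hf'mem : f - fsub ∈ Igen K := by
    rw [(f - fsub).as_sum]
    refine sum_mem fun a ha => ?_
    have h1 : ¬ a ≤ m1 := by
      intro hle
      exact (mem_support_iff.mp ha) (hcoeff a (Or.inl hle))
    have h2 : ¬ a ≤ m2 := by
      intro hle
      exact (mem_support_iff.mp ha) (hcoeff a (Or.inr hle))
    exact mono_mem_Igen (a 5) a _ le_rfl h1 h2
  have : f = (f - fsub) + fsub := by ring
  rw [this]
  exact add_mem hf'mem hsub_mem

lemma Igen_le_ann : Igen K ≤ annIdeal (FF K) := by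
  rw [Igen, Ideal.span_le]
  intro p hp
  simp only [Set.mem_insert_iff, Set.mem_singleton_iff] at hp
  have base : ∀ t : Fin 6 →₀ ℕ, ¬ t ≤ m1 → ¬ t ≤ m2 →
      (monomial t (1:K)) ∈ annIdeal (FF K) := by
    intro t h1 h2
    rw [mem_annIdeal_iff, FF, contract_add_right,
      contract_monomial_monomial, contract_monomial_monomial, if_neg h1, if_neg h2, add_zero]
  rcases hp with rfl | rfl | rfl | rfl | rfl | rfl
  · exact base t1 (fun h => by have := h 1; simp at this) (fun h => by have := h 1; simp at this)
  · exact base t2 (fun h => by have := h 4; simp at this) (fun h => by have := h 4; simp at this)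
  · exact base t3 (fun h => by have := h 3; simp at this) (fun h => by have := h 3; simp at this)
  · exact base t4 (fun h => by have := h 2; simp at this) (fun h => by have := h 2; simp at this)
  · exact base t5 (fun h => by have := h 0; simp at this) (fun h => by have := h 0; simp at this)
  · rw [SetLike.mem_coe, mem_annIdeal_iff, GG, FF, contract_add_left, contract_add_right,
      contract_add_right, contract_monomial_monomial, contract_monomial_monomial,
      contract_monomial_monomial, contract_monomial_monomial]
    rw [if_neg (fun h : v7 ≤ m1 => by have := h 5; simp at this),
      if_pos (Finsupp.le_def.mpr (fun i : Fin 6 => by fin_cases i <;> simp : v7 ≤ m2)),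
      if_pos (Finsupp.le_def.mpr (fun i : Fin 6 => by fin_cases i <;> simp : dd ≤ m1)),
      if_neg (fun h : dd ≤ m2 => by have := h 3; simp at this)]
    have : m2 - v7 = m1 - dd := by
      ext i
      simp only [Finsupp.tsub_apply]
      fin_cases i <;> rfl
    rw [this, add_zero, zero_add, ← map_add]
    norm_num

theorem ann_eq_Igen : annIdeal (FF K) = Igen K := by
  refine le_antisymm (fun f hf => ann_le_Igen f ((mem_annIdeal_iff _ f).mp hf)) Igen_le_ann


section CIPart

lemma mem_span_mono (L : List (Fin 6 →₀ ℕ)) (f : MvPolynomial (Fin 6) K) :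
    f ∈ Ideal.span {p | p ∈ L.map (fun s => monomial s (1:K))} ↔
      ∀ a ∈ f.support, ∃ s ∈ L, s ≤ a := by
  classical
  constructor
  · intro h
    refine Submodule.span_induction (p := fun x _ => ∀ a ∈ x.support, ∃ s ∈ L, s ≤ a)
      ?_ ?_ ?_ ?_ h
    · rintro x hx
      simp only [Set.mem_setOf_eq, List.mem_map] at hx
      obtain ⟨s, hsL, rfl⟩ := hx
      intro a ha
      have := support_monomial_subset ha
      rw [Finset.mem_singleton] at this
      rw [this]
      exact ⟨s, hsL, le_rfl⟩
    · simp
    · intro x y _ _ hx hy a ha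
      rcases Finset.mem_union.mp (support_add ha) with h' | h'
      exacts [hx a h', hy a h']
    · intro r x _ hx a ha
      rw [smul_eq_mul] at ha
      have := support_mul r x ha
      rw [Finset.mem_add] at this
      obtain ⟨u, hu, v, hv, rfl⟩ := this
      obtain ⟨s, hsL, hsv⟩ := hx v hv
      refine ⟨s, hsL, le_trans hsv (Finsupp.le_def.mpr fun i => ?_)⟩
      simp only [Finsupp.add_apply]
      omega
  · intro h
    rw [f.as_sum]
    refine sum_mem fun a ha => ?_
    obtain ⟨s, hsL, hle⟩ := h a ha
    have key : monomial a (coeff a f) = monomial (a - s) (coeff a f) * monomial s 1 := by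
      rw [monomial_mul, mul_one]
      refine monomial_exp_congr _ _ (fun i => ?_) _
      have := hle i
      simp only [Finsupp.add_apply, Finsupp.tsub_apply]
      omega
    rw [key]
    exact Ideal.mul_mem_left _ _ (Ideal.subset_span
      (by simp only [Set.mem_setOf_eq, List.mem_map]; exact ⟨s, hsL, rfl⟩))

lemma isSMulRegular_quot {R' : Type*} [CommRing R'] {p : Submodule R' R'} {r : R'}
    (h : ∀ x, r * x ∈ p → x ∈ p) : IsSMulRegular (R' ⧸ p) r := by
  intro x y hxy
  obtain ⟨a, rfl⟩ := Submodule.Quotient.mk_surjective p x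
  obtain ⟨b, rfl⟩ := Submodule.Quotient.mk_surjective p y
  have hxy' : r • (Submodule.Quotient.mk a : R' ⧸ p) = r • Submodule.Quotient.mk b := hxy
  rw [← Submodule.Quotient.mk_smul, ← Submodule.Quotient.mk_smul,
    Submodule.Quotient.eq] at hxy'
  rw [Submodule.Quotient.eq]
  have e : r • a - r • b = r * (a - b) := by
    rw [smul_eq_mul, smul_eq_mul]; ring
  rw [e] at hxy'
  exact h _ hxy'

lemma mono_step (L : List (Fin 6 →₀ ℕ)) (t : Fin 6 →₀ ℕ)
    (hdisj : ∀ s ∈ L, ∀ i, s i = 0 ∨ t i = 0) (x : MvPolynomial (Fin 6) K)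
    (hx : monomial t (1:K) * x ∈ Ideal.span {p | p ∈ L.map (fun s => monomial s (1:K))}) :
    x ∈ Ideal.span {p | p ∈ L.map (fun s => monomial s (1:K))} := by
  rw [mem_span_mono] at hx ⊢
  intro a ha
  have hmem : t + a ∈ (monomial t (1:K) * x).support := by
    rw [mem_support_iff, coeff_monomial_mul', if_pos (self_le_add_right t a),
      add_tsub_cancel_left, one_mul]
    exact mem_support_iff.mp ha
  obtain ⟨s, hsL, hle⟩ := hx _ hmem
  refine ⟨s, hsL, Finsupp.le_def.mpr fun i => ?_⟩
  have h1 := hle i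
  simp only [Finsupp.add_apply] at h1
  rcases hdisj s hsL i with h' | h' <;> omega

lemma g_step (x : MvPolynomial (Fin 6) K)
    (hx : GG K * x ∈ Ideal.span
      {p | p ∈ ([t1, t2, t3, t4, t5]).map (fun s => monomial s (1:K))}) :
    x ∈ Ideal.span {p | p ∈ ([t1, t2, t3, t4, t5]).map (fun s => monomial s (1:K))} := by
  classical
  set L : List (Fin 6 →₀ ℕ) := [t1, t2, t3, t4, t5] with hL
  set xJ : MvPolynomial (Fin 6) K :=
    ∑ a ∈ x.support.filter (fun a => ∃ s ∈ L, s ≤ a), monomial a (coeff a x) with hxJ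
  have hxJmem : xJ ∈ Ideal.span {p | p ∈ L.map (fun s => monomial s (1:K))} := by
    refine sum_mem fun a ha => ?_
    rw [mem_span_mono]
    intro b hb
    have := support_monomial_subset hb
    rw [Finset.mem_singleton] at this
    subst this
    exact (Finset.mem_filter.mp ha).2
  have hco : ∀ b : Fin 6 →₀ ℕ, coeff b xJ = if (∃ s ∈ L, s ≤ b) then coeff b x else 0 := by
    intro b
    rw [hxJ, coeff_sum]
    have : ∀ a ∈ x.support.filter (fun a => ∃ s ∈ L, s ≤ a),
        coeff b (monomial a (coeff a x)) = if a = b then coeff a x else 0 := by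
      intro a _; rw [coeff_monomial]
    rw [Finset.sum_congr rfl this]
    rw [Finset.sum_ite_eq' (x.support.filter (fun a => ∃ s ∈ L, s ≤ a)) b
      (fun a => coeff a x)]
    by_cases hP : ∃ s ∈ L, s ≤ b
    · rw [if_pos hP]
      by_cases hbs : b ∈ x.support
      · rw [if_pos (Finset.mem_filter.mpr ⟨hbs, hP⟩)]
      · rw [if_neg (show b ∉ x.support.filter (fun a => ∃ s ∈ L, s ≤ a) from
          fun hc => hbs (Finset.mem_filter.mp hc).1), notMem_support_iff.mp hbs]
    · rw [if_neg hP, if_neg (show b ∉ x.support.filter (fun a => ∃ s ∈ L, s ≤ a) from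
        fun hc => hP (Finset.mem_filter.mp hc).2)]
  set xS : MvPolynomial (Fin 6) K := x - xJ with hxS
  have hSco : ∀ b : Fin 6 →₀ ℕ, coeff b xS = if (∃ s ∈ L, s ≤ b) then 0 else coeff b x := by
    intro b
    rw [hxS, coeff_sub, hco]
    split_ifs <;> ring
  have h1 : GG K * xS ∈ Ideal.span {p | p ∈ L.map (fun s => monomial s (1:K))} := by
    rw [hxS, mul_sub]
    exact sub_mem hx (Ideal.mul_mem_left _ _ hxJmem)
  have hzero : xS = 0 := by
    by_contra hne
    have hne' : xS.support.Nonempty :=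
      Finset.nonempty_iff_ne_empty.mpr (fun hc => hne (support_eq_empty.mp hc))
    obtain ⟨a, haS, hamax⟩ := Finset.exists_max_image xS.support (fun a => a 5) hne'
    have hstd : ¬ ∃ s ∈ L, s ≤ a := by
      intro hP
      have := hSco a
      rw [if_pos hP] at this
      exact (mem_support_iff.mp haS) this
    have hstd2 : ¬ ∃ s ∈ L, s ≤ a + v7 := by
      rintro ⟨s, hs, hle⟩
      refine hstd ⟨s, hs, Finsupp.le_def.mpr fun i => ?_⟩
      have h1' := hle i
      simp only [Finsupp.add_apply] at h1'
      have hs5 : s (5 : Fin 6) = 0 := by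
        rcases (show s = t1 ∨ s = t2 ∨ s = t3 ∨ s = t4 ∨ s = t5 by simpa [hL] using hs)
          with rfl | rfl | rfl | rfl | rfl <;> simp
      fin_cases i <;> simp at h1' ⊢ <;> omega
    have hanot : coeff (a + v7) (GG K * xS) = 0 := by
      by_contra h0
      obtain ⟨s, hsL, hle⟩ := (mem_span_mono _ _).mp h1 _ (mem_support_iff.mpr h0)
      exact hstd2 ⟨s, hsL, hle⟩
    have hexp : coeff (a + v7) (GG K * xS) =
        coeff a xS + (if dd ≤ a + v7 then coeff (a + v7 - dd) xS else 0) := by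
      rw [GG, add_mul, coeff_add, coeff_monomial_mul', coeff_monomial_mul',
        if_pos (le_add_self : v7 ≤ a + v7), add_tsub_cancel_right, one_mul]
      split_ifs with h
      · rw [one_mul]
      · rfl
    rw [hexp] at hanot
    by_cases hdd : dd ≤ a + v7
    · rw [if_pos hdd] at hanot
      have hbmem : a + v7 - dd ∈ xS.support := by
        rw [mem_support_iff]
        intro h0
        rw [h0, add_zero] at hanot
        exact (mem_support_iff.mp haS) hanot
      have hmax := hamax _ hbmem
      simp only [Finsupp.tsub_apply, Finsupp.add_apply, v7_5, dd_5] at hmax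
      omega
    · rw [if_neg hdd, add_zero] at hanot
      exact (mem_support_iff.mp haS) hanot
  have hxeq : x = xJ := by
    have := sub_eq_zero.mp (hxS ▸ hzero)
    exact this
  rw [hxeq]
  exact hxJmem

/-- The regular sequence. -/
noncomputable def gsL (K : Type*) [Field K] : List (MvPolynomial (Fin 6) K) :=
  [monomial t1 1, monomial t2 1, monomial t3 1, monomial t4 1, monomial t5 1, GG K]

lemma span_gsL : Ideal.span {x | x ∈ gsL K} = Igen K := by
  rw [Igen]
  congr 1
  ext x
  simp [gsL, Set.mem_insert_iff, or_assoc]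

lemma smul_top_eq (J : Ideal (MvPolynomial (Fin 6) K)) :
    (J • ⊤ : Submodule (MvPolynomial (Fin 6) K) (MvPolynomial (Fin 6) K)) = J := by
  rw [Ideal.smul_eq_mul, Ideal.mul_top]

lemma gs_regular : RingTheory.Sequence.IsRegular (MvPolynomial (Fin 6) K) (gsL K) := by
  rw [RingTheory.Sequence.isRegular_iff]
  constructor
  · rw [RingTheory.Sequence.isWeaklyRegular_iff]
    intro i hi
    have hi6 : i < 6 := by simpa [gsL] using hi
    interval_cases i
    · rw [show List.take 0 (gsL K) = List.map (fun s => monomial s (1:K)) [] from rfl,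
        smul_top_eq]
      exact isSMulRegular_quot (fun x hx => mono_step [] t1 (by simp) x hx)
    · rw [show List.take 1 (gsL K) = List.map (fun s => monomial s (1:K)) [t1] from rfl,
        smul_top_eq]
      refine isSMulRegular_quot (fun x hx => mono_step [t1] t2 ?_ x hx)
      intro s hs i
      rcases (by simpa using hs : s = t1) with rfl
      fin_cases i <;> simp
    · rw [show List.take 2 (gsL K) = List.map (fun s => monomial s (1:K)) [t1, t2] from rfl,
        smul_top_eq]
      refine isSMulRegular_quot (fun x hx => mono_step [t1, t2] t3 ?_ x hx)
      intro s hs i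
      rcases (by simpa using hs : s = t1 ∨ s = t2) with rfl | rfl <;>
        fin_cases i <;> simp
    · rw [show List.take 3 (gsL K) = List.map (fun s => monomial s (1:K)) [t1, t2, t3] from rfl,
        smul_top_eq]
      refine isSMulRegular_quot (fun x hx => mono_step [t1, t2, t3] t4 ?_ x hx)
      intro s hs i
      rcases (by simpa using hs : s = t1 ∨ s = t2 ∨ s = t3) with rfl | rfl | rfl <;>
        fin_cases i <;> simp
    · rw [show List.take 4 (gsL K)
          = List.map (fun s => monomial s (1:K)) [t1, t2, t3, t4] from rfl, smul_top_eq]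
      refine isSMulRegular_quot (fun x hx => mono_step [t1, t2, t3, t4] t5 ?_ x hx)
      intro s hs i
      rcases (by simpa using hs : s = t1 ∨ s = t2 ∨ s = t3 ∨ s = t4) with rfl | rfl | rfl | rfl <;>
        fin_cases i <;> simp
    · rw [show List.take 5 (gsL K)
          = List.map (fun s => monomial s (1:K)) [t1, t2, t3, t4, t5] from rfl, smul_top_eq]
      exact isSMulRegular_quot (fun x hx => g_step x hx)
  · intro htop
    rw [smul_top_eq] at htop
    have h1 : (1 : MvPolynomial (Fin 6) K) ∈ Ideal.ofList (gsL K) := htop ▸ Submodule.mem_top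
    have hle : Ideal.ofList (gsL K) ≤ RingHom.ker (constantCoeff (σ := Fin 6) (R := K)) := by
      rw [Ideal.span_le]
      intro p hp
      simp only [gsL, List.mem_cons, List.not_mem_nil, or_false, Set.mem_setOf_eq] at hp
      have hmono : ∀ (u : Fin 6 →₀ ℕ), u (3 : Fin 6) ≠ 0 ∨ u (1 : Fin 6) ≠ 0 ∨ u (4 : Fin 6) ≠ 0
          ∨ u (2 : Fin 6) ≠ 0 ∨ u (0 : Fin 6) ≠ 0 ∨ u (5 : Fin 6) ≠ 0 →
          constantCoeff (monomial u (1:K)) = 0 := by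
        intro u hu
        rw [constantCoeff_monomial, if_neg]
        intro hc
        subst hc
        simp at hu
      rcases hp with rfl | rfl | rfl | rfl | rfl | rfl
      · exact hmono t1 (by simp)
      · exact hmono t2 (by simp)
      · exact hmono t3 (by simp)
      · exact hmono t4 (by simp)
      · exact hmono t5 (by simp)
      · rw [SetLike.mem_coe, RingHom.mem_ker, GG, map_add, hmono v7 (by simp),
          hmono dd (by simp), add_zero]
    have := hle h1
    rw [RingHom.mem_ker, map_one] at this
    exact one_ne_zero this

end CIPart

end Stmt18Aux

open scoped MvPolynomial in
/-- For `F = X^3 Y Z^4 T U^2 V^6 (X^2 Y Z T^2 U − V^7)` in six variables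
(`X,Y,Z,T,U,V` being `X 0,…,X 5`), we have
`Ann_R(F) = (y^3, u^4, t^4, z^6, x^6, v^7 + x^2 y z t^2 u)`, a complete intersection. -/
theorem stmt18 [CharZero K] :
    annIdeal ((X 0 : MvPolynomial (Fin 6) K) ^ 3 * X 1 * X 2 ^ 4 * X 3 * X 4 ^ 2 * X 5 ^ 6 *
        (X 0 ^ 2 * X 1 * X 2 * X 3 ^ 2 * X 4 - X 5 ^ 7)) =
      Ideal.span {(X 1 : MvPolynomial (Fin 6) K) ^ 3, X 4 ^ 4, X 3 ^ 4, X 2 ^ 6, X 0 ^ 6,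
        X 5 ^ 7 + X 0 ^ 2 * X 1 * X 2 * X 3 ^ 2 * X 4} ∧
    IsCI 6 (annIdeal ((X 0 : MvPolynomial (Fin 6) K) ^ 3 * X 1 * X 2 ^ 4 * X 3 * X 4 ^ 2 *
        X 5 ^ 6 * (X 0 ^ 2 * X 1 * X 2 * X 3 ^ 2 * X 4 - X 5 ^ 7))) := by
  rw [hFF]
  constructor
  · rw [ann_eq_Igen, hg1, hg2, hg3, hg4, hg5, hg6]
    rfl
  · rw [ann_eq_Igen]
    exact ⟨gsL K, rfl, gs_regular, span_gsL⟩
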